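/- Let Ω ⊆ ℝ² be open, ω, c > 0, let p : Ω → ℂ be twice continuously differentiable and f : Ω → ℂ² continuously differentiable, and suppose Δp + (ω²/c²) p = div f on Ω. Define w := (i/ω)(f − ∇p). Then on Ω: (i) ∇ div w + (ω²/c²) w = (iω/c²) f; (ii) p = −(i c²/ω) div w; and (iii) for every x ∈ Ω̄ on which w, ∇p, f extend continuously and every unit vector n ∈ ℝ², w(x)·n = 0 if and only if ∇p(x)·n = f(x)·n. -/

import Mathlib

/-!
Taking the divergence of `w = (i/ω)(f − ∇p)` and using the Helmholtz equation gives
`div w = (i/ω)(div f − Δp) = (iω/c²) p`. This identity is (ii) after solving for `p`, and its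
gradient is `(iω/c²)∇p = (iω/c²) f − (ω²/c²) w`, which is (i). For (iii), the limits satisfy
`W = (i/ω)(F − G)` by uniqueness of limits, and `i/ω ≠ 0`.
-/

open Filter Topology

noncomputable section

/-- Points of the plane. -/
abbrev Pt : Type := Fin 2 → ℝ

/-- Partial derivative `∂ᵢ g` of a complex-valued function on the plane. -/
def pd (i : Fin 2) (g : Pt → ℂ) (x : Pt) : ℂ := fderiv ℝ g x (Pi.single i 1)

/-- Divergence of a planar complex vector field. -/
def vdiv (v : Pt → Fin 2 → ℂ) (x : Pt) : ℂ := ∑ i, pd i (fun y => v y i) x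

/-- Laplacian of a complex-valued function on the plane. -/
def lap (g : Pt → ℂ) (x : Pt) : ℂ := ∑ i, pd i (fun y => pd i g y) x

def grad (g : Pt → ℂ) (x : Pt) : Fin 2 → ℂ := fun i => pd i g x

def velocity (ω : ℝ) (f : Pt → Fin 2 → ℂ) (p : Pt → ℂ) (x : Pt) : Fin 2 → ℂ :=
  (Complex.I / ω) • (f x - grad p x)

section PartialDerivatives

variable {g h : Pt → ℂ} {x : Pt}

lemma pd_const_mul (i : Fin 2) (a : ℂ) (hg : DifferentiableAt ℝ g x) :
    pd i (fun y => a * g y) x = a * pd i g x := by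
  simp [pd, fderiv_const_mul hg]

lemma pd_sub (i : Fin 2) (hg : DifferentiableAt ℝ g x) (hh : DifferentiableAt ℝ h x) :
    pd i (fun y => g y - h y) x = pd i g x - pd i h x := by
  simp [pd, fderiv_fun_sub hg hh]

lemma pd_congr_of_eventuallyEq (i : Fin 2) (hgh : g =ᶠ[𝓝 x] h) : pd i g x = pd i h x := by
  simp [pd, hgh.fderiv_eq]

lemma ContDiffAt.differentiableAt_pd (hg : ContDiffAt ℝ 2 g x) (i : Fin 2) :
    DifferentiableAt ℝ (pd i g) x :=
  ((hg.fderiv_right (by norm_num)).clm_apply contDiffAt_const).differentiableAt one_ne_zero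

end PartialDerivatives

section Velocity

variable {ω c : ℝ} {f : Pt → Fin 2 → ℂ} {p : Pt → ℂ}

lemma vdiv_velocity {x : Pt} (hf : DifferentiableAt ℝ f x)
    (hp : ∀ i, DifferentiableAt ℝ (pd i p) x) :
    vdiv (velocity ω f p) x = Complex.I / ω * (vdiv f x - lap p x) := by
  simp only [vdiv, lap, Finset.mul_sum, ← Finset.sum_sub_distrib]
  refine Finset.sum_congr rfl fun i _ => ?_
  have hfi : DifferentiableAt ℝ (fun y => f y i) x := differentiableAt_pi.1 hf i
  change pd i (fun y => Complex.I / ω * (f y i - pd i p y)) x = _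
  rw [pd_const_mul i _ (hfi.fun_sub (hp i)), pd_sub i hfi (hp i)]

lemma eqOn_vdiv_velocity_of_helmholtz {Ω : Set Pt} (hΩ : IsOpen Ω) (hω : ω ≠ 0)
    (hp : ContDiffOn ℝ 2 p Ω) (hf : ContDiffOn ℝ 1 f Ω)
    (hHelm : ∀ x ∈ Ω, lap p x + ((ω : ℂ) ^ 2 / c ^ 2) * p x = vdiv f x) :
    Set.EqOn (vdiv (velocity ω f p)) (fun x => Complex.I * ω / c ^ 2 * p x) Ω := by
  intro x hx
  have hpx := hp.contDiffAt (hΩ.mem_nhds hx)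
  have hfx := hf.contDiffAt (hΩ.mem_nhds hx)
  have hω' : (ω : ℂ) ≠ 0 := by exact_mod_cast hω
  rw [vdiv_velocity (hfx.differentiableAt one_ne_zero) hpx.differentiableAt_pd, ← hHelm x hx]
  field_simp
  ring

lemma pd_vdiv_velocity_of_helmholtz {Ω : Set Pt} (hΩ : IsOpen Ω) (hω : ω ≠ 0)
    (hp : ContDiffOn ℝ 2 p Ω) (hf : ContDiffOn ℝ 1 f Ω)
    (hHelm : ∀ x ∈ Ω, lap p x + ((ω : ℂ) ^ 2 / c ^ 2) * p x = vdiv f x)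
    {x : Pt} (hx : x ∈ Ω) (j : Fin 2) :
    pd j (vdiv (velocity ω f p)) x = Complex.I * ω / c ^ 2 * pd j p x := by
  have hEq : vdiv (velocity ω f p) =ᶠ[𝓝 x] fun y => Complex.I * ω / c ^ 2 * p y :=
    eventuallyEq_of_mem (hΩ.mem_nhds hx) (eqOn_vdiv_velocity_of_helmholtz hΩ hω hp hf hHelm)
  rw [pd_congr_of_eventuallyEq j hEq,
    pd_const_mul j _ ((hp.contDiffAt (hΩ.mem_nhds hx)).differentiableAt (by norm_num))]

end Velocity

lemma dotProduct_lim_smul_sub_eq_zero_iff {α ι : Type*} [Fintype ι] {l : Filter α} [l.NeBot]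
    {a : ℂ} (ha : a ≠ 0) {u v : α → ι → ℂ} {U V W : ι → ℂ}
    (hu : Tendsto u l (𝓝 U)) (hv : Tendsto v l (𝓝 V))
    (hw : Tendsto (fun y => a • (u y - v y)) l (𝓝 W)) (n : ι → ℂ) :
    W ⬝ᵥ n = 0 ↔ V ⬝ᵥ n = U ⬝ᵥ n := by
  obtain rfl : W = a • (U - V) := tendsto_nhds_unique hw ((hu.sub hv).const_smul a)
  rw [smul_dotProduct, smul_eq_zero_iff_right ha, sub_dotProduct, sub_eq_zero, eq_comm]

/-- if `Δp + (ω²/c²)p = div f` on open `Ω ⊆ ℝ²` and `w := (i/ω)(f − ∇p)`,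
then (i) `∇ div w + (ω²/c²) w = (iω/c²) f` on `Ω`; (ii) `p = −(ic²/ω) div w` on `Ω`;
(iii) at every point of the closure of `Ω` at which `w`, `∇p`, `f` extend continuously
(with limits `W`, `G`, `F`) and every unit vector `n`, `W·n = 0 ↔ G·n = F·n`. -/
theorem stmt_10 (Ω : Set Pt) (hΩ : IsOpen Ω) (ω c : ℝ) (hω : 0 < ω) (hc : 0 < c)
    (p : Pt → ℂ) (f : Pt → Fin 2 → ℂ)
    (hp : ContDiffOn ℝ 2 p Ω) (hf : ContDiffOn ℝ 1 f Ω)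
    (hHelm : ∀ x ∈ Ω, lap p x + ((ω : ℂ) ^ 2 / c ^ 2) * p x = vdiv f x)
    (w : Pt → Fin 2 → ℂ)
    (hw : ∀ x j, w x j = Complex.I / ω * (f x j - pd j p x)) :
    (∀ x ∈ Ω, ∀ j : Fin 2,
        pd j (fun y => vdiv w y) x + ((ω : ℂ) ^ 2 / c ^ 2) * w x j
          = Complex.I * ω / c ^ 2 * f x j)
    ∧ (∀ x ∈ Ω, p x = -(Complex.I * c ^ 2 / ω) * vdiv w x)
    ∧ (∀ x ∈ closure Ω, ∀ W G F : Fin 2 → ℂ,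
        Tendsto (fun y => (fun j => w y j)) (nhdsWithin x Ω) (nhds W) →
        Tendsto (fun y => (fun j => pd j p y)) (nhdsWithin x Ω) (nhds G) →
        Tendsto f (nhdsWithin x Ω) (nhds F) →
        ∀ n : Pt, (∑ i, (n i) ^ 2) = 1 →
          ((∑ j, W j * (n j : ℂ)) = 0 ↔ (∑ j, G j * (n j : ℂ)) = ∑ j, F j * (n j : ℂ))) := by
  obtain rfl : w = velocity ω f p := funext fun x => funext (hw x)
  have hω' : (ω : ℂ) ≠ 0 := by exact_mod_cast hω.ne'
  have hc' : (c : ℂ) ≠ 0 := by exact_mod_cast hc.ne'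
  refine ⟨fun x hx j => ?_, fun x hx => ?_, fun x hx W G F hW hG hF n _ => ?_⟩
  · rw [pd_vdiv_velocity_of_helmholtz hΩ hω.ne' hp hf hHelm hx j, hw x j]
    field_simp
    ring
  · rw [eqOn_vdiv_velocity_of_helmholtz hΩ hω.ne' hp hf hHelm hx]
    field_simp
    linear_combination p x * Complex.I_mul_I
  · have := mem_closure_iff_nhdsWithin_neBot.mp hx
    exact dotProduct_lim_smul_sub_eq_zero_iff (div_ne_zero Complex.I_ne_zero hω') hF hG hW _

end
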